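/- (Bellman recursion for the dynamic program.) For every t ∈ {1,…,T}, every g ∈ H_B and every η : D → H_D, the value OPT(t,g,η) satisfies OPT(t,g,η) = min over all g' ∈ H_B with g' ≤ g and all η' : D → H_D with η'(d) ≤ η(d) for every d ∈ D of [ OPT(t−1,g',η') + B_cost(t,g',g) + B_expdam(t,g) + Σ_{d∈D} ( D_cost(t,d,η'(d),η(d)) + D_expdam(t,d,η(d),g) ) ], where values are taken in ℝ ∪ {+∞} and the infimum of an empty set is +∞. -/

import Mathlib

/-!
The partial cost up to time `t + 1` is the partial cost up to time `t` plus the cost of the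
step `t → t + 1`. Restricting a profile that reaches `(g, η)` at time `t + 1` gives a profile
reaching some `(g', η') ≤ (g, η)` at time `t`; conversely, a profile reaching `(g', η')` at
time `t` becomes one reaching `(g, η)` at time `t + 1` by holding the heights at `(g, η)` from
time `t + 1` on, which keeps it monotone and leaves its costs up to time `t` unchanged.
-/

open Finset

/-- A point of the LP relaxation: `CY t d h1 h2`, `B t g1 g2`, `DY t d h g`,
with times in `Fin (T+1)`, dike heights in `Fin n`, barrier heights in `Fin m`. -/
structure DikePoint (T n m : ℕ) (D : Type) where
  CY : Fin (T + 1) → D → Fin n → Fin n → ℝ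
  B : Fin (T + 1) → Fin m → Fin m → ℝ
  DY : Fin (T + 1) → D → Fin n → Fin m → ℝ

/-- Membership in the polytope `Q`: box constraints, support only on
nondecreasing height pairs, initial conditions, flow conservation, and the
linking constraints. -/
def memQ {T n m : ℕ} {D : Type} [Fintype D] [NeZero n] [NeZero m]
    (x : DikePoint T n m D) : Prop :=
  (∀ t d h1 h2, x.CY t d h1 h2 ∈ Set.Icc (0 : ℝ) 1) ∧
  (∀ t g1 g2, x.B t g1 g2 ∈ Set.Icc (0 : ℝ) 1) ∧
  (∀ t d h g, x.DY t d h g ∈ Set.Icc (0 : ℝ) 1) ∧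
  (∀ t d h1 h2, ¬ h1 ≤ h2 → x.CY t d h1 h2 = 0) ∧
  (∀ t g1 g2, ¬ g1 ≤ g2 → x.B t g1 g2 = 0) ∧
  (∀ d, x.CY 0 d 0 0 = 1) ∧
  (∀ d h1 h2, 0 < h2 → x.CY 0 d h1 h2 = 0) ∧
  (x.B 0 0 0 = 1) ∧
  (∀ g1 g2, 0 < g2 → x.B 0 g1 g2 = 0) ∧
  (∀ (t : Fin T) (d : D) (h : Fin n),
    ∑ h1 ∈ Iic h, x.CY t.castSucc d h1 h = ∑ h3 ∈ Ici h, x.CY t.succ d h h3) ∧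
  (∀ t d (h : Fin n), ∑ h1 ∈ Iic h, x.CY t d h1 h = ∑ g : Fin m, x.DY t d h g) ∧
  (∀ (t : Fin T) (g : Fin m),
    ∑ g1 ∈ Iic g, x.B t.castSucc g1 g = ∑ g3 ∈ Ici g, x.B t.succ g g3) ∧
  (∀ t (d : D) (g : Fin m), ∑ g1 ∈ Iic g, x.B t g1 g = ∑ h : Fin n, x.DY t d h g)

/-- A point is integral if every coordinate is `0` or `1`. -/
def isIntegral {T n m : ℕ} {D : Type} (x : DikePoint T n m D) : Prop :=
  (∀ t d h1 h2, x.CY t d h1 h2 = 0 ∨ x.CY t d h1 h2 = 1) ∧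
  (∀ t g1 g2, x.B t g1 g2 = 0 ∨ x.B t g1 g2 = 1) ∧
  (∀ t d h g, x.DY t d h g = 0 ∨ x.DY t d h g = 1)

/-- The linear objective function of the LP relaxation. -/
def obj {T n m : ℕ} {D : Type} [Fintype D]
    (Dcost : Fin (T + 1) → D → Fin n → Fin n → ℝ)
    (Dexp : Fin (T + 1) → D → Fin n → Fin m → ℝ)
    (Bcost : Fin (T + 1) → Fin m → Fin m → ℝ)
    (Bexp : Fin (T + 1) → Fin m → ℝ)
    (x : DikePoint T n m D) : ℝ :=
  (∑ t, ∑ d, ∑ h2, ∑ h1 ∈ Iic h2, Dcost t d h1 h2 * x.CY t d h1 h2) +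
  (∑ t, ∑ d, ∑ h, ∑ g, Dexp t d h g * x.DY t d h g) +
  (∑ t, ∑ g2, ∑ g1 ∈ Iic g2, (Bcost t g1 g2 + Bexp t g2) * x.B t g1 g2)

/-- Condition (i). -/
def condI {T n m : ℕ} {D : Type}
    (Dexp : Fin (T + 1) → D → Fin n → Fin m → ℝ) : Prop :=
  ∀ (t : Fin (T + 1)) (d : D) (h h' : Fin n) (g g' : Fin m), h ≤ h' → g ≤ g' →
    Dexp t d h g + Dexp t d h' g' ≤ Dexp t d h' g + Dexp t d h g'

/-- Condition (ii). -/
def condII {T m : ℕ}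
    (Bcost : Fin (T + 1) → Fin m → Fin m → ℝ) : Prop :=
  ∀ (t : Fin (T + 1)) (g1 g1' g2 g2' : Fin m), g1 ≤ g1' → g1' ≤ g2 → g2 ≤ g2' →
    Bcost t g1 g2 + Bcost t g1' g2' ≤ Bcost t g1 g2' + Bcost t g1' g2

/-- Condition (iii). -/
def condIII {T n : ℕ} {D : Type}
    (Dcost : Fin (T + 1) → D → Fin n → Fin n → ℝ) : Prop :=
  ∀ (t : Fin (T + 1)) (d : D) (h1 h1' h2 h2' : Fin n), h1 ≤ h1' → h1' ≤ h2 → h2 ≤ h2' →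
    Dcost t d h1 h2 + Dcost t d h1' h2' ≤ Dcost t d h1 h2' + Dcost t d h1' h2

/-- The value of a height profile at the previous time step, with value `z`
at "time −1" (i.e. when `t = 0`). -/
def prevH {k : ℕ} {α : Type} (f : Fin (k + 1) → α) (z : α) (t : Fin (k + 1)) : α :=
  if (t : ℕ) = 0 then z else f ⟨(t : ℕ) - 1, by have := t.isLt; omega⟩

/-- The total cost of a family of dike height profiles `hd` together with a
barrier height profile `hb` (profiles extended by value `0` at time `−1`). -/
noncomputable def profileCost {T n m : ℕ} {D : Type} [Fintype D] [NeZero n] [NeZero m]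
    (Dcost : Fin (T + 1) → D → Fin n → Fin n → ℝ)
    (Dexp : Fin (T + 1) → D → Fin n → Fin m → ℝ)
    (Bcost : Fin (T + 1) → Fin m → Fin m → ℝ)
    (Bexp : Fin (T + 1) → Fin m → ℝ)
    (hd : D → Fin (T + 1) → Fin n) (hb : Fin (T + 1) → Fin m) : ℝ :=
  ∑ t, (Bcost t (prevH hb 0 t) (hb t) + Bexp t (hb t) +
    ∑ d, (Dcost t d (prevH (hd d) 0 t) (hd d t) + Dexp t d (hd d t) (hb t)))

/-- The 0-1 point of the polytope associated with a family of dike height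
profiles and a barrier height profile. -/
noncomputable def profilePoint {T n m : ℕ} {D : Type} [NeZero n] [NeZero m]
    (hd : D → Fin (T + 1) → Fin n) (hb : Fin (T + 1) → Fin m) :
    DikePoint T n m D where
  CY := fun t d h1 h2 => if h1 = prevH (hd d) 0 t ∧ h2 = hd d t then 1 else 0
  B := fun t g1 g2 => if g1 = prevH hb 0 t ∧ g2 = hb t then 1 else 0
  DY := fun t d h g => if h = hd d t ∧ g = hb t then 1 else 0

/-- The partial profile cost up to time `t` of a family of dike height profiles
and a barrier height profile (profiles extended by value `0` at time `−1`). -/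
noncomputable def partialCost {T n m : ℕ} {D : Type} [Fintype D] [NeZero n] [NeZero m]
    (Dcost : Fin (T + 1) → D → Fin n → Fin n → ℝ)
    (Dexp : Fin (T + 1) → D → Fin n → Fin m → ℝ)
    (Bcost : Fin (T + 1) → Fin m → Fin m → ℝ)
    (Bexp : Fin (T + 1) → Fin m → ℝ)
    (hd : D → Fin (T + 1) → Fin n) (hb : Fin (T + 1) → Fin m)
    (t : Fin (T + 1)) : ℝ :=
  ∑ s ∈ Iic t, (Bcost s (prevH hb 0 s) (hb s) + Bexp s (hb s) +
    ∑ d, (Dcost s d (prevH (hd d) 0 s) (hd d s) + Dexp s d (hd d s) (hb s)))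

/-- `OPT t g η`: the infimum (in `ℝ ∪ {+∞}`, i.e. `EReal`; the infimum of the
empty set being `+∞`) of the partial profile cost up to time `t` over all
height profiles whose barrier height at time `t` is `g` and whose dike heights
at time `t` are given by `η`. -/
noncomputable def OPT {T n m : ℕ} {D : Type} [Fintype D] [NeZero n] [NeZero m]
    (Dcost : Fin (T + 1) → D → Fin n → Fin n → ℝ)
    (Dexp : Fin (T + 1) → D → Fin n → Fin m → ℝ)
    (Bcost : Fin (T + 1) → Fin m → Fin m → ℝ)
    (Bexp : Fin (T + 1) → Fin m → ℝ)
    (t : Fin (T + 1)) (g : Fin m) (η : D → Fin n) : EReal :=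
  sInf {c : EReal | ∃ (hb : Fin (T + 1) → Fin m) (hd : D → Fin (T + 1) → Fin n),
    Monotone hb ∧ hb 0 = 0 ∧ (∀ d, Monotone (hd d) ∧ hd d 0 = 0) ∧
    hb t = g ∧ (∀ d, hd d t = η d) ∧
    c = ((partialCost Dcost Dexp Bcost Bexp hd hb t : ℝ) : EReal)}

lemma EReal.le_sInf_add_coe {x : EReal} {S : Set EReal} {r : ℝ} (h : ∀ c ∈ S, x ≤ c + r) :
    x ≤ sInf S + r :=
  (EReal.sub_le_iff_le_add (.inl (EReal.coe_ne_bot r)) (.inl (EReal.coe_ne_top r))).1 <|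
    le_sInf fun c hc => EReal.sub_le_of_le_add (h c hc)

lemma Fin.Iio_succ_eq_Iic_castSucc {T : ℕ} (t : Fin T) : Iio t.succ = Iic t.castSucc := by
  ext s
  simp only [mem_Iio, mem_Iic, Fin.lt_def, Fin.le_def, Fin.val_succ, Fin.val_castSucc]
  omega

def extendConstAfter {ι α : Type*} [LinearOrder ι] (f : ι → α) (u : ι) (a : α) : ι → α :=
  fun s => if s ≤ u then f s else a

lemma extendConstAfter_of_le {ι α : Type*} [LinearOrder ι] (f : ι → α) {u s : ι} (a : α)
    (hs : s ≤ u) : extendConstAfter f u a s = f s :=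
  if_pos hs

lemma extendConstAfter_of_lt {ι α : Type*} [LinearOrder ι] (f : ι → α) {u s : ι} (a : α)
    (hs : u < s) : extendConstAfter f u a s = a :=
  if_neg hs.not_ge

lemma Monotone.extendConstAfter {ι α : Type*} [LinearOrder ι] [Preorder α] {f : ι → α}
    (hf : Monotone f) {u : ι} {a : α} (hua : f u ≤ a) :
    Monotone (extendConstAfter f u a) := by
  intro s s' hss'
  rcases le_or_gt s' u with hs' | hs'
  · simpa only [extendConstAfter_of_le f a hs', extendConstAfter_of_le f a (hss'.trans hs')]
      using hf hss'
  rw [extendConstAfter_of_lt f a hs']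
  rcases le_or_gt s u with hs | hs
  · rw [extendConstAfter_of_le f a hs]
    exact (hf hs).trans hua
  · rw [extendConstAfter_of_lt f a hs]

lemma prevH_succ {T : ℕ} {α : Type} (f : Fin (T + 1) → α) (z : α) (t : Fin T) :
    prevH f z t.succ = f t.castSucc :=
  if_neg (Fin.succ_ne_zero t ∘ Fin.ext)

lemma prevH_congr {T : ℕ} {α : Type} {f f' : Fin (T + 1) → α} (z : α) {u : Fin (T + 1)}
    (hff' : ∀ s ≤ u, f s = f' s) {s : Fin (T + 1)} (hs : s ≤ u) :
    prevH f z s = prevH f' z s := by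
  unfold prevH
  split
  · rfl
  · exact hff' _ (by rw [Fin.le_def] at hs ⊢; simp only; omega)

section Bellman

variable {T n m : ℕ} {D : Type} [Fintype D] [NeZero n] [NeZero m]
  (Dcost : Fin (T + 1) → D → Fin n → Fin n → ℝ)
  (Dexp : Fin (T + 1) → D → Fin n → Fin m → ℝ)
  (Bcost : Fin (T + 1) → Fin m → Fin m → ℝ)
  (Bexp : Fin (T + 1) → Fin m → ℝ)

def stepCost (s : Fin (T + 1)) (g' g : Fin m) (η' η : D → Fin n) : ℝ :=
  Bcost s g' g + Bexp s g + ∑ d, (Dcost s d (η' d) (η d) + Dexp s d (η d) g)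

lemma partialCost_succ (hd : D → Fin (T + 1) → Fin n) (hb : Fin (T + 1) → Fin m) (t : Fin T) :
    partialCost Dcost Dexp Bcost Bexp hd hb t.succ =
      partialCost Dcost Dexp Bcost Bexp hd hb t.castSucc +
        stepCost Dcost Dexp Bcost Bexp t.succ (hb t.castSucc) (hb t.succ)
          (fun d => hd d t.castSucc) (fun d => hd d t.succ) := by
  rw [partialCost, Iic_eq_cons_Iio, sum_cons, Fin.Iio_succ_eq_Iic_castSucc, partialCost,
    stepCost]
  simp only [prevH_succ]
  ring

lemma partialCost_congr {hd hd' : D → Fin (T + 1) → Fin n} {hb hb' : Fin (T + 1) → Fin m}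
    {u : Fin (T + 1)} (hB : ∀ s ≤ u, hb s = hb' s) (hD : ∀ d, ∀ s ≤ u, hd d s = hd' d s) :
    partialCost Dcost Dexp Bcost Bexp hd hb u = partialCost Dcost Dexp Bcost Bexp hd' hb' u := by
  refine sum_congr rfl fun s hs => ?_
  rw [mem_Iic] at hs
  simp only [prevH_congr 0 hB hs, hB s hs, prevH_congr 0 (hD _) hs, hD _ s hs]

lemma OPT_le_partialCost {hb : Fin (T + 1) → Fin m} {hd : D → Fin (T + 1) → Fin n}
    (hb_mono : Monotone hb) (hb_zero : hb 0 = 0) (hd_prof : ∀ d, Monotone (hd d) ∧ hd d 0 = 0)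
    (u : Fin (T + 1)) :
    OPT Dcost Dexp Bcost Bexp u (hb u) (fun d => hd d u) ≤
      partialCost Dcost Dexp Bcost Bexp hd hb u :=
  sInf_le ⟨hb, hd, hb_mono, hb_zero, hd_prof, rfl, fun _ => rfl, rfl⟩

lemma OPT_succ_le_OPT_castSucc_add {t : Fin T} {g g' : Fin m} {η η' : D → Fin n}
    (hg : g' ≤ g) (hη : ∀ d, η' d ≤ η d) :
    OPT Dcost Dexp Bcost Bexp t.succ g η ≤
      OPT Dcost Dexp Bcost Bexp t.castSucc g' η' +
        (stepCost Dcost Dexp Bcost Bexp t.succ g' g η' η : EReal) := by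
  refine EReal.le_sInf_add_coe ?_
  rintro _ ⟨hb, hd, hb_mono, hb_zero, hd_prof, rfl, hd_t, rfl⟩
  obtain rfl : η' = fun d => hd d t.castSucc := funext fun d => (hd_t d).symm
  set hb' := extendConstAfter hb t.castSucc g
  set hd' := fun d => extendConstAfter (hd d) t.castSucc (η d)
  have hB : ∀ s ≤ t.castSucc, hb s = hb' s := fun s hs => (extendConstAfter_of_le _ _ hs).symm
  have hD : ∀ d, ∀ s ≤ t.castSucc, hd d s = hd' d s :=
    fun d s hs => (extendConstAfter_of_le _ _ hs).symm
  have hb'_succ : hb' t.succ = g := extendConstAfter_of_lt _ _ Fin.castSucc_lt_succ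
  have hd'_succ : (fun d => hd' d t.succ) = η :=
    funext fun d => extendConstAfter_of_lt _ _ Fin.castSucc_lt_succ
  have hd'_prof : ∀ d, Monotone (hd' d) ∧ hd' d 0 = 0 := fun d =>
    ⟨(hd_prof d).1.extendConstAfter (hη d), (hD d 0 (Fin.zero_le _)).symm.trans (hd_prof d).2⟩
  calc OPT Dcost Dexp Bcost Bexp t.succ g η
      = OPT Dcost Dexp Bcost Bexp t.succ (hb' t.succ) (fun d => hd' d t.succ) := by
        rw [hb'_succ, hd'_succ]
    _ ≤ partialCost Dcost Dexp Bcost Bexp hd' hb' t.succ :=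
        OPT_le_partialCost Dcost Dexp Bcost Bexp (hb_mono.extendConstAfter hg)
          ((hB 0 (Fin.zero_le _)).symm.trans hb_zero) hd'_prof t.succ
    _ = (partialCost Dcost Dexp Bcost Bexp hd hb t.castSucc : EReal) +
          (stepCost Dcost Dexp Bcost Bexp t.succ (hb t.castSucc) g
            (fun d => hd d t.castSucc) η : EReal) := by
        rw [← EReal.coe_add, partialCost_succ, ← partialCost_congr Dcost Dexp Bcost Bexp hB hD,
          hb'_succ, hd'_succ, ← hB _ le_rfl]
        simp only [← hD _ _ le_rfl]

end Bellman

theorem statement_13_general (T n m : ℕ) [NeZero n] [NeZero m]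
    (D : Type) [Fintype D]
    (Dcost : Fin (T + 1) → D → Fin n → Fin n → ℝ)
    (Dexp : Fin (T + 1) → D → Fin n → Fin m → ℝ)
    (Bcost : Fin (T + 1) → Fin m → Fin m → ℝ)
    (Bexp : Fin (T + 1) → Fin m → ℝ)
    (t : Fin T) (g : Fin m) (η : D → Fin n) :
    OPT Dcost Dexp Bcost Bexp t.succ g η =
      sInf {c : EReal | ∃ (g' : Fin m) (η' : D → Fin n),
        g' ≤ g ∧ (∀ d, η' d ≤ η d) ∧
        c = OPT Dcost Dexp Bcost Bexp t.castSucc g' η' +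
          ((Bcost t.succ g' g + Bexp t.succ g +
            ∑ d, (Dcost t.succ d (η' d) (η d) + Dexp t.succ d (η d) g) : ℝ) :
              EReal)} := by
  refine le_antisymm (le_sInf ?_) (le_sInf ?_)
  · rintro _ ⟨g', η', hg', hη', rfl⟩
    exact OPT_succ_le_OPT_castSucc_add Dcost Dexp Bcost Bexp hg' hη'
  · rintro _ ⟨hb, hd, hb_mono, hb_zero, hd_prof, rfl, hd_t, rfl⟩
    obtain rfl : η = fun d => hd d t.succ := funext fun d => (hd_t d).symm
    have hle : t.castSucc ≤ t.succ := Fin.castSucc_lt_succ.le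
    refine sInf_le_of_le ⟨hb t.castSucc, fun d => hd d t.castSucc, hb_mono hle,
      fun d => (hd_prof d).1 hle, rfl⟩ ?_
    rw [partialCost_succ, EReal.coe_add]
    exact add_le_add_left (OPT_le_partialCost Dcost Dexp Bcost Bexp hb_mono hb_zero hd_prof _) _

/-- Bellman recursion for the dynamic program: for every
`t ∈ {1,…,T}` (written `t.succ` for `t : Fin T`), every barrier height `g` and
every dike-height vector `η`, `OPT` satisfies the Bellman recursion. -/
theorem statement_13 (T n m : ℕ) (hT : 1 ≤ T) [NeZero n] [NeZero m]
    (D : Type) [Fintype D] [Nonempty D]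
    (Dcost : Fin (T + 1) → D → Fin n → Fin n → ℝ)
    (Dexp : Fin (T + 1) → D → Fin n → Fin m → ℝ)
    (Bcost : Fin (T + 1) → Fin m → Fin m → ℝ)
    (Bexp : Fin (T + 1) → Fin m → ℝ)
    (hDcost : ∀ t d h1 h2, h1 ≤ h2 → 0 ≤ Dcost t d h1 h2)
    (hDexp : ∀ t d h g, 0 ≤ Dexp t d h g)
    (hBcost : ∀ t g1 g2, g1 ≤ g2 → 0 ≤ Bcost t g1 g2)
    (hBexp : ∀ t g, 0 ≤ Bexp t g)
    (t : Fin T) (g : Fin m) (η : D → Fin n) :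
    OPT Dcost Dexp Bcost Bexp t.succ g η =
      sInf {c : EReal | ∃ (g' : Fin m) (η' : D → Fin n),
        g' ≤ g ∧ (∀ d, η' d ≤ η d) ∧
        c = OPT Dcost Dexp Bcost Bexp t.castSucc g' η' +
          ((Bcost t.succ g' g + Bexp t.succ g +
            ∑ d, (Dcost t.succ d (η' d) (η d) + Dexp t.succ d (η d) g) : ℝ) :
              EReal)} :=
  statement_13_general T n m D Dcost Dexp Bcost Bexp t g η
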